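/- arXiv:1209.4541 — 3 statements merged into one kernel-verified Lean document; each statement's English description precedes it below -/
import Mathlib

section
/- Let E be a real normed space and D ⊆ E a nonempty open set with nonempty boundary. Define the distance ratio metric j_D(z₁,z₂) = log(1 + |z₁ - z₂| / min(d_D(z₁), d_D(z₂))) for z₁, z₂ ∈ D, where d_D(z) = dist(z, ∂D). Then j_D is a metric on D. -/
/-!
The boundary distance `dD D` is positive on `D` and `1`-Lipschitz, and that is all the argument
uses: for any positive `1`-Lipschitz function `δ` on a metric space,
`log (1 + dist x y / min (δ x) (δ y))` is a metric. Only the triangle inequality needs an argument.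
By symmetry assume `δ x ≤ δ z`; exponentiated, the claim is
`1 + d(x,z)/δ x ≤ (1 + d(x,y)/min(δ x, δ y)) (1 + d(y,z)/min(δ y, δ z))`. If `δ y < δ x`, both
factors have the smaller denominator `δ y`; otherwise the Lipschitz bound `δ y ≤ δ x + d(x,y)`
makes up for the possibly larger denominator `min(δ y, δ z)` of the second factor.
-/

open Set Metric Real intervalIntegral

noncomputable def dD {E : Type*} [NormedAddCommGroup E] [NormedSpace ℝ E]
    (D : Set E) (z : E) : ℝ := Metric.infDist z (frontier D)

noncomputable def jD {E : Type*} [NormedAddCommGroup E] [NormedSpace ℝ E]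
    (D : Set E) (z₁ z₂ : E) : ℝ :=
  Real.log (1 + dist z₁ z₂ / min (dD D z₁) (dD D z₂))

noncomputable def clen {E : Type*} [NormedAddCommGroup E] [NormedSpace ℝ E]
    (γ : ℝ → E) : ℝ := ∫ t in (0:ℝ)..1, ‖deriv γ t‖

noncomputable def sublen {E : Type*} [NormedAddCommGroup E] [NormedSpace ℝ E]
    (γ : ℝ → E) (a b : ℝ) : ℝ := ∫ t in a..b, ‖deriv γ t‖

noncomputable def qhLen {E : Type*} [NormedAddCommGroup E] [NormedSpace ℝ E]
    (D : Set E) (γ : ℝ → E) : ℝ := ∫ t in (0:ℝ)..1, ‖deriv γ t‖ / dD D (γ t)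

def IsCurveIn {E : Type*} [NormedAddCommGroup E] [NormedSpace ℝ E]
    (D : Set E) (γ : ℝ → E) (z₁ z₂ : E) : Prop :=
  ContDiffOn ℝ 1 γ (Set.Icc 0 1) ∧ γ 0 = z₁ ∧ γ 1 = z₂ ∧
    ∀ t ∈ Set.Icc (0:ℝ) 1, γ t ∈ D

noncomputable def kD {E : Type*} [NormedAddCommGroup E] [NormedSpace ℝ E]
    (D : Set E) (z₁ z₂ : E) : ℝ :=
  sInf {l : ℝ | ∃ γ : ℝ → E, IsCurveIn D γ z₁ z₂ ∧ l = qhLen D γ}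

def IsUniform {E : Type*} [NormedAddCommGroup E] [NormedSpace ℝ E]
    (D : Set E) (c : ℝ) : Prop :=
  ∀ z₁ ∈ D, ∀ z₂ ∈ D, ∃ γ : ℝ → E, IsCurveIn D γ z₁ z₂ ∧
    clen γ ≤ c * dist z₁ z₂ ∧
    ∀ t ∈ Set.Icc (0:ℝ) 1,
      min (sublen γ 0 t) (sublen γ t 1) ≤ c * dD D (γ t)

variable {E : Type*} [NormedAddCommGroup E] [NormedSpace ℝ E]

theorem one_add_div_le_mul_one_add_div_min {a b c p q r : ℝ} (ha : 0 < a) (hb : 0 < b)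
    (hac : a ≤ c) (hp : 0 ≤ p) (hq : 0 ≤ q) (hr : r ≤ p + q) (hba : b ≤ a + p) :
    1 + r / a ≤ (1 + p / min a b) * (1 + q / min b c) := by
  rcases le_or_gt a b with hab | hba'
  · set m := min b c
    have hm : a ≤ m := le_min hab hac
    have hm' : m ≤ a + p := (min_le_left b c).trans hba
    have hm0 : 0 < m := ha.trans_le hm
    rw [min_eq_left hab]
    calc 1 + r / a ≤ 1 + p / a + q / a := by rw [add_assoc, ← add_div]; gcongr
      _ ≤ 1 + p / a + q * (a + p) / (a * m) := by
          gcongr 1 + p / a + ?_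
          rw [div_le_div_iff₀ ha (mul_pos ha hm0)]
          nlinarith [mul_nonneg hq ha.le]
      _ = (1 + p / a) * (1 + q / m) := by field_simp
  · rw [min_eq_right hba'.le, min_eq_left (hba'.le.trans hac)]
    calc 1 + r / a ≤ 1 + (p + q) / b := by gcongr
      _ ≤ (1 + p / b) * (1 + q / b) := by
          rw [add_div]; nlinarith [div_nonneg hp hb.le, div_nonneg hq hb.le]

noncomputable def distRatio {X : Type*} [PseudoMetricSpace X] (δ : X → ℝ) (x y : X) : ℝ :=
  Real.log (1 + dist x y / min (δ x) (δ y))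

section DistRatio

variable {X : Type*} [PseudoMetricSpace X] (δ : X → ℝ) {x y z : X}

theorem distRatio_comm (x y : X) : distRatio δ x y = distRatio δ y x := by
  rw [distRatio, distRatio, dist_comm, min_comm]

theorem distRatio_nonneg (hx : 0 ≤ δ x) (hy : 0 ≤ δ y) : 0 ≤ distRatio δ x y :=
  Real.log_nonneg (le_add_of_nonneg_right (div_nonneg dist_nonneg (le_min hx hy)))

theorem distRatio_eq_zero_iff (hx : 0 < δ x) (hy : 0 < δ y) :
    distRatio δ x y = 0 ↔ dist x y = 0 := by
  have hm : 0 < min (δ x) (δ y) := lt_min hx hy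
  have ht : 0 ≤ dist x y / min (δ x) (δ y) := div_nonneg dist_nonneg hm.le
  rw [distRatio, Real.log_eq_zero]
  constructor
  · rintro (h | h | h)
    · linarith
    · simpa [hm.ne'] using h
    · linarith
  · intro h
    simp [h]

theorem distRatio_le_add_of_le (hδ : LipschitzWith 1 δ) (hx : 0 < δ x) (hy : 0 < δ y)
    (hxz : δ x ≤ δ z) : distRatio δ x z ≤ distRatio δ x y + distRatio δ y z := by
  have hz : 0 < δ z := hx.trans_le hxz
  have hyx : δ y ≤ δ x + dist x y := by simpa [dist_comm] using hδ.le_add_mul y x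
  unfold distRatio
  rw [min_eq_left hxz, ← Real.log_mul (by positivity) (by positivity)]
  exact Real.log_le_log (by positivity) <|
    one_add_div_le_mul_one_add_div_min hx hy hxz dist_nonneg dist_nonneg (dist_triangle x y z) hyx

theorem distRatio_le_add (hδ : LipschitzWith 1 δ) (hx : 0 < δ x) (hy : 0 < δ y) (hz : 0 < δ z) :
    distRatio δ x z ≤ distRatio δ x y + distRatio δ y z := by
  rcases le_total (δ x) (δ z) with hxz | hzx
  · exact distRatio_le_add_of_le δ hδ hx hy hxz
  · rw [distRatio_comm δ x z, distRatio_comm δ x y, distRatio_comm δ y z, add_comm]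
    exact distRatio_le_add_of_le δ hδ hz hy hzx

end DistRatio

theorem dD_pos {D : Set E} (hD : IsOpen D) (hbd : (frontier D).Nonempty) {z : E} (hz : z ∈ D) :
    0 < dD D z := by
  rw [dD, ← isClosed_frontier.notMem_iff_infDist_pos hbd]
  exact fun h => (hD.inter_frontier_eq.subset ⟨hz, h⟩ : z ∈ (∅ : Set E))

theorem stmt2_general (D : Set E) (hD : IsOpen D)
    (hbd : (frontier D).Nonempty) :
    (∀ z₁ ∈ D, ∀ z₂ ∈ D, 0 ≤ jD D z₁ z₂) ∧
    (∀ z₁ ∈ D, ∀ z₂ ∈ D, (jD D z₁ z₂ = 0 ↔ z₁ = z₂)) ∧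
    (∀ z₁ ∈ D, ∀ z₂ ∈ D, jD D z₁ z₂ = jD D z₂ z₁) ∧
    (∀ z₁ ∈ D, ∀ z₂ ∈ D, ∀ z₃ ∈ D,
      jD D z₁ z₃ ≤ jD D z₁ z₂ + jD D z₂ z₃) := by
  have hpos : ∀ z ∈ D, 0 < dD D z := fun z hz => dD_pos hD hbd hz
  have hlip : LipschitzWith 1 (dD D) := lipschitz_infDist_pt (frontier D)
  refine ⟨fun z₁ h₁ z₂ h₂ => ?_, fun z₁ h₁ z₂ h₂ => ?_, fun z₁ _ z₂ _ => ?_,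
    fun z₁ h₁ z₂ h₂ z₃ h₃ => ?_⟩
  · exact distRatio_nonneg _ (hpos z₁ h₁).le (hpos z₂ h₂).le
  · exact (distRatio_eq_zero_iff _ (hpos z₁ h₁) (hpos z₂ h₂)).trans dist_eq_zero
  · exact distRatio_comm _ z₁ z₂
  · exact distRatio_le_add _ hlip (hpos z₁ h₁) (hpos z₂ h₂) (hpos z₃ h₃)

theorem stmt2 (D : Set E) (hD : IsOpen D) (hne : D.Nonempty)
    (hbd : (frontier D).Nonempty) :
    (∀ z₁ ∈ D, ∀ z₂ ∈ D, 0 ≤ jD D z₁ z₂) ∧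
    (∀ z₁ ∈ D, ∀ z₂ ∈ D, (jD D z₁ z₂ = 0 ↔ z₁ = z₂)) ∧
    (∀ z₁ ∈ D, ∀ z₂ ∈ D, jD D z₁ z₂ = jD D z₂ z₁) ∧
    (∀ z₁ ∈ D, ∀ z₂ ∈ D, ∀ z₃ ∈ D,
      jD D z₁ z₃ ≤ jD D z₁ z₂ + jD D z₂ z₃) :=
  stmt2_general D hD hbd
end

section
/- Let E be a real normed space, D ⊆ E open with nonempty boundary, and z₁, z₂ ∈ D with |z₁ - z₂| < d_D(z₁). Then k_D(z₁, z₂) ≤ log(1 + |z₁-z₂|/(d_D(z₁) - |z₁-z₂|)) ≤ |z₁-z₂|/(d_D(z₁) - |z₁-z₂|). -/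
open Set Metric Real intervalIntegral

variable {E : Type*} [NormedAddCommGroup E] [NormedSpace ℝ E]

/-!
The segment `t ↦ z₁ + t (z₂ - z₁)` stays in the ball `B(z₁, d_D(z₁))`, which lies in `D` because
it is connected, contains `z₁` and misses `∂D`. With `d = d_D(z₁)` and `r = |z₁ - z₂|`, the
distance from the segment at time `t` to `∂D` is at least `d - t r`, so its quasihyperbolic length
is at most `∫₀¹ r / (d - t r) dt = log (d / (d - r))`; `log x ≤ x - 1` gives the second inequality.
-/

open AffineMap

theorem IsPreconnected.subset_interior_of_disjoint_frontier {X : Type*} [TopologicalSpace X]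
    {s t : Set X} (hs : IsPreconnected s) (hst : (s ∩ t).Nonempty)
    (hfr : Disjoint s (frontier t)) : s ⊆ interior t := by
  refine hs.subset_of_closure_inter_subset isOpen_interior ?_ ?_
  · obtain ⟨x, hxs, hxt⟩ := hst
    exact ⟨x, hxs, self_sdiff_frontier t ▸ ⟨hxt, hfr.notMem_of_mem_left hxs⟩⟩
  · rintro x ⟨hxt, hxs⟩
    exact closure_sdiff_frontier t ▸ ⟨closure_mono interior_subset hxt, hfr.notMem_of_mem_left hxs⟩

theorem ball_dD_subset {D : Set E} {z : E} (hz : z ∈ D) : ball z (dD D z) ⊆ D := fun _ hy =>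
  interior_subset <| (convex_ball z (dD D z)).isPreconnected.subset_interior_of_disjoint_frontier
    ⟨z, mem_ball_self (pos_of_mem_ball hy), hz⟩ disjoint_ball_infDist hy

theorem sub_mul_pos_of_mem_Icc {d r t : ℝ} (hr₀ : 0 ≤ r) (hrd : r < d) (ht : t ∈ Icc (0:ℝ) 1) :
    0 < d - t * r := by
  nlinarith [ht.2]

theorem integral_div_sub_mul {d r : ℝ} (hr₀ : 0 ≤ r) (hrd : r < d) :
    ∫ t in (0:ℝ)..1, r / (d - t * r) = log (d / (d - r)) := by
  have hpos : ∀ t ∈ uIcc (0:ℝ) 1, 0 < d - t * r := fun t ht =>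
    sub_mul_pos_of_mem_Icc hr₀ hrd (by rwa [uIcc_of_le zero_le_one] at ht)
  have hderiv : ∀ t ∈ uIcc (0:ℝ) 1,
      HasDerivAt (fun t => -log (d - t * r)) (r / (d - t * r)) t := by
    intro t ht
    have hlin : HasDerivAt (fun t : ℝ => d - t * r) (-r) t := by
      simpa using ((hasDerivAt_id t).mul_const r).const_sub d
    simpa [neg_div] using (hlin.log (hpos t ht).ne').fun_neg
  have hint : IntervalIntegrable (fun t => r / (d - t * r)) MeasureTheory.volume 0 1 :=
    (continuousOn_const.div (by fun_prop) fun t ht => (hpos t ht).ne').intervalIntegrable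
  rw [integral_eq_sub_of_hasDerivAt hderiv hint,
    log_div (by linarith) (sub_pos.2 hrd).ne']
  simp only [zero_mul, sub_zero, one_mul]
  rw [sub_neg_eq_add, neg_add_eq_sub]

theorem sub_le_dD_lineMap (D : Set E) (z₁ z₂ : E) {t : ℝ} (ht : 0 ≤ t) :
    dD D z₁ - t * dist z₁ z₂ ≤ dD D (lineMap z₁ z₂ t) := by
  have h := infDist_le_infDist_add_dist (x := z₁) (y := lineMap z₁ z₂ t) (s := frontier D)
  rw [dist_left_lineMap, Real.norm_of_nonneg ht] at h
  unfold dD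
  linarith

theorem isCurveIn_lineMap {D : Set E} {z₁ z₂ : E} (h₁ : z₁ ∈ D) (hlt : dist z₁ z₂ < dD D z₁) :
    IsCurveIn D (lineMap z₁ z₂) z₁ z₂ := by
  refine ⟨(contDiff_lineMap z₁ z₂).contDiffOn, lineMap_apply_zero _ _, lineMap_apply_one _ _,
    fun t ht => ball_dD_subset h₁ ?_⟩
  rw [mem_ball', dist_left_lineMap, Real.norm_of_nonneg ht.1]
  nlinarith [ht.2, dist_nonneg (x := z₁) (y := z₂)]

theorem kD_le_qhLen {D : Set E} {γ : ℝ → E} {z₁ z₂ : E} (hγ : IsCurveIn D γ z₁ z₂) :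
    kD D z₁ z₂ ≤ qhLen D γ := by
  refine csInf_le ⟨0, ?_⟩ ⟨γ, hγ, rfl⟩
  rintro _ ⟨γ', -, rfl⟩
  exact integral_nonneg zero_le_one fun t _ => div_nonneg (norm_nonneg _) infDist_nonneg

theorem qhLen_lineMap_le {D : Set E} {z₁ z₂ : E} (hlt : dist z₁ z₂ < dD D z₁) :
    qhLen D (lineMap z₁ z₂) ≤
      ∫ t in (0:ℝ)..1, dist z₁ z₂ / (dD D z₁ - t * dist z₁ z₂) := by
  set r := dist z₁ z₂
  have hpos : ∀ t ∈ Icc (0:ℝ) 1, 0 < dD D z₁ - t * r := fun t =>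
    sub_mul_pos_of_mem_Icc dist_nonneg hlt
  have hle : ∀ t ∈ Icc (0:ℝ) 1, dD D z₁ - t * r ≤ dD D (lineMap z₁ z₂ t) := fun t ht =>
    sub_le_dD_lineMap D z₁ z₂ ht.1
  have hspeed : ∀ t, ‖deriv (lineMap z₁ z₂ : ℝ → E) t‖ = r := fun t => by
    rw [hasDerivAt_lineMap.deriv, ← dist_eq_norm']
  unfold qhLen
  simp_rw [hspeed]
  refine integral_mono_on zero_le_one ?_ ?_ fun t ht =>
    div_le_div_of_nonneg_left dist_nonneg (hpos t ht) (hle t ht)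
  · refine ContinuousOn.intervalIntegrable_of_Icc zero_le_one <| continuousOn_const.div
      ((continuous_infDist_pt _).comp lineMap_continuous).continuousOn fun t ht => ?_
    exact ((hpos t ht).trans_le (hle t ht)).ne'
  · exact ContinuousOn.intervalIntegrable_of_Icc zero_le_one <| continuousOn_const.div
      (by fun_prop) fun t ht => (hpos t ht).ne'

theorem stmt6_general (D : Set E) (z₁ z₂ : E) (h₁ : z₁ ∈ D)
    (hlt : dist z₁ z₂ < dD D z₁) :
    kD D z₁ z₂ ≤ Real.log (1 + dist z₁ z₂ / (dD D z₁ - dist z₁ z₂)) ∧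
    Real.log (1 + dist z₁ z₂ / (dD D z₁ - dist z₁ z₂)) ≤
      dist z₁ z₂ / (dD D z₁ - dist z₁ z₂) := by
  have hgap : 0 < dD D z₁ - dist z₁ z₂ := sub_pos.2 hlt
  have hratio : 1 + dist z₁ z₂ / (dD D z₁ - dist z₁ z₂) = dD D z₁ / (dD D z₁ - dist z₁ z₂) := by
    field_simp
    ring
  constructor
  · calc kD D z₁ z₂ ≤ qhLen D (lineMap z₁ z₂) := kD_le_qhLen (isCurveIn_lineMap h₁ hlt)
      _ ≤ ∫ t in (0:ℝ)..1, dist z₁ z₂ / (dD D z₁ - t * dist z₁ z₂) := qhLen_lineMap_le hlt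
      _ = _ := by rw [integral_div_sub_mul dist_nonneg hlt, hratio]
  · linarith [log_le_sub_one_of_pos (by positivity : 0 < 1 + dist z₁ z₂ / (dD D z₁ - dist z₁ z₂))]

theorem stmt6 (D : Set E) (hD : IsOpen D) (hbd : (frontier D).Nonempty)
    (z₁ z₂ : E) (h₁ : z₁ ∈ D) (h₂ : z₂ ∈ D)
    (hlt : dist z₁ z₂ < dD D z₁) :
    kD D z₁ z₂ ≤ Real.log (1 + dist z₁ z₂ / (dD D z₁ - dist z₁ z₂)) ∧
    Real.log (1 + dist z₁ z₂ / (dD D z₁ - dist z₁ z₂)) ≤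
      dist z₁ z₂ / (dD D z₁ - dist z₁ z₂) :=
  stmt6_general D z₁ z₂ h₁ hlt
end

section
/- Let E be a real normed space, D ⊆ E open with nonempty boundary, and let γ be a rectifiable curve in D from x to y such that for every z ∈ γ, min(ℓ(γ[x,z]), ℓ(γ[y,z])) ≤ b·d_D(z) for some constant b ≥ 1 (double b-cone condition). Then ℓ_{k_D}(γ) ≤ 4b·(1 + log(1 + ℓ(γ)/min(d_D(x), d_D(y)))). -/
open Set Metric Real intervalIntegral

variable {E : Type*} [NormedAddCommGroup E] [NormedSpace ℝ E]

set_option maxHeartbeats 2000000 in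
open MeasureTheory Filter in
theorem stmt19 (D : Set E) (hD : IsOpen D) (hbd : (frontier D).Nonempty)
    (x y : E) (hx : x ∈ D) (hy : y ∈ D)
    (b : ℝ) (hb : 1 ≤ b)
    (γ : ℝ → E) (hγ : IsCurveIn D γ x y)
    (hcone : ∀ t ∈ Set.Icc (0:ℝ) 1,
      min (sublen γ 0 t) (sublen γ t 1) ≤ b * dD D (γ t)) :
    qhLen D γ ≤ 4 * b * (1 + Real.log (1 + clen γ / min (dD D x) (dD D y))) := by
  obtain ⟨hγ1, hγx, hγy, hγD⟩ := hγ
  set f : ℝ → ℝ := fun t => ‖deriv γ t‖ with hf_def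
  set g : ℝ → ℝ := fun t => ‖derivWithin γ (Set.Icc 0 1) t‖ with hg_def
  have hud : UniqueDiffOn ℝ (Set.Icc (0:ℝ) 1) := uniqueDiffOn_Icc one_pos
  have hgc : ContinuousOn g (Set.Icc 0 1) :=
    (hγ1.continuousOn_derivWithin hud le_rfl).norm
  have hfg : ∀ t ∈ Set.Ioo (0:ℝ) 1, f t = g t := by
    intro t ht
    simp only [hf_def, hg_def, derivWithin_of_mem_nhds (Icc_mem_nhds ht.1 ht.2)]
  have hγcont : ContinuousOn γ (Set.Icc 0 1) := hγ1.continuousOn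
  -- a.e. equality of f and g on subintervals of [0,1]
  have hae : ∀ a c : ℝ, 0 ≤ a → a ≤ c → c ≤ 1 →
      ∀ᵐ t ∂(volume : Measure ℝ), t ∈ Set.uIoc a c → f t = g t := by
    intro a c ha hac hc1
    have h1 : ∀ᵐ (t : ℝ) ∂volume, t ∉ ({1} : Set ℝ) :=
      measure_eq_zero_iff_ae_notMem.mp (measure_singleton 1)
    filter_upwards [h1] with t ht1 htm
    rw [Set.uIoc_of_le hac] at htm
    refine hfg t ⟨lt_of_le_of_lt ha htm.1, lt_of_le_of_ne (htm.2.trans hc1) ?_⟩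
    simpa using ht1
  have haeR : ∀ a c : ℝ, 0 ≤ a → a ≤ c → c ≤ 1 →
      f =ᵐ[volume.restrict (Set.uIoc a c)] g := by
    intro a c ha hac hc1
    filter_upwards [ae_restrict_mem measurableSet_uIoc,
      ae_restrict_of_ae (hae a c ha hac hc1)] with t htm himp
    exact himp htm
  -- master integrability
  have hIntMul : ∀ (w : ℝ → ℝ) (a c : ℝ), 0 ≤ a → a ≤ c → c ≤ 1 →
      ContinuousOn w (Set.Icc a c) →
      IntervalIntegrable (fun t => f t * w t) volume a c := by
    intro w a c ha hac hc1 hw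
    have hg_int : IntervalIntegrable (fun t => g t * w t) volume a c :=
      ((hgc.mono (Set.Icc_subset_Icc ha hc1)).mul hw).intervalIntegrable_of_Icc hac
    rw [intervalIntegrable_iff] at hg_int ⊢
    exact hg_int.congr (((haeR a c ha hac hc1).symm).mul (Filter.EventuallyEq.refl _ w))
  have hIntf : ∀ a c : ℝ, 0 ≤ a → a ≤ c → c ≤ 1 →
      IntervalIntegrable f volume a c := by
    intro a c ha hac hc1
    simpa using hIntMul (fun _ => 1) a c ha hac hc1 continuousOn_const
  -- the arclength function
  set s : ℝ → ℝ := fun t => ∫ u in (0:ℝ)..t, f u with hs_def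
  have hs0 : s 0 = 0 := integral_same
  have hsub : ∀ a c : ℝ, 0 ≤ a → a ≤ c → c ≤ 1 → s c - s a = ∫ t in a..c, f t := by
    intro a c ha hac hc1
    exact integral_interval_sub_left (hIntf 0 c le_rfl (ha.trans hac) hc1)
      (hIntf 0 a le_rfl ha (hac.trans hc1))
  have hsmono : ∀ a c : ℝ, 0 ≤ a → a ≤ c → c ≤ 1 → s a ≤ s c := by
    intro a c ha hac hc1
    have h := hsub a c ha hac hc1
    have h2 : (0:ℝ) ≤ ∫ t in a..c, f t :=
      intervalIntegral.integral_nonneg hac (fun u _ => norm_nonneg _)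
    linarith
  have hscont : ContinuousOn s (Set.Icc 0 1) := by
    have := intervalIntegral.continuousOn_primitive_interval'
      (hIntf 0 1 le_rfl zero_le_one le_rfl) (Set.left_mem_uIcc)
    simpa [Set.uIcc_of_le (zero_le_one : (0:ℝ) ≤ 1)] using this
  set L : ℝ := s 1 with hL_def
  have hL0 : 0 ≤ L := by
    have := hsmono 0 1 le_rfl zero_le_one le_rfl; linarith [hs0]
  -- positivity of the distances
  set m : ℝ := min (dD D x) (dD D y) with hm_def
  have hdDpos : ∀ z ∈ D, 0 < dD D z := by
    intro z hz
    have hzf : z ∉ frontier D := by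
      rw [hD.frontier_eq]; exact fun h => h.2 hz
    exact (isClosed_frontier.notMem_iff_infDist_pos hbd).mp hzf
  have hm : 0 < m := lt_min (hdDpos x hx) (hdDpos y hy)
  have hdpos : ∀ t ∈ Set.Icc (0:ℝ) 1, 0 < dD D (γ t) := fun t ht => hdDpos _ (hγD t ht)
  have hdcont : ContinuousOn (fun t => dD D (γ t)) (Set.Icc 0 1) :=
    (Metric.continuous_infDist_pt (frontier D)).comp_continuousOn hγcont
  -- arclength bounds the distance
  have harc : ∀ a c : ℝ, 0 ≤ a → a ≤ c → c ≤ 1 → ‖γ c - γ a‖ ≤ s c - s a := by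
    intro a c ha hac hc1
    have hseq : ∀ v ∈ Set.Icc (0:ℝ) 1, s v = ∫ τ in (0:ℝ)..v, g τ := by
      intro v hv
      exact intervalIntegral.integral_congr_ae (hae 0 v le_rfl hv.1 hv.2)
    have key : ∀ ⦃u⦄, u ∈ Set.Icc a c → ‖γ u - γ a‖ ≤ s u - s a := by
      refine image_norm_le_of_norm_deriv_right_le_deriv_boundary'
        (f' := fun u => derivWithin γ (Set.Icc 0 1) u) (B' := g)
        ((hγcont.mono (Set.Icc_subset_Icc ha hc1)).sub continuousOn_const) ?_ (by simp)
        ((hscont.mono (Set.Icc_subset_Icc ha hc1)).sub continuousOn_const) ?_ ?_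
      · intro u hu
        have hu01 : u ∈ Set.Ico (0:ℝ) 1 := ⟨ha.trans hu.1, lt_of_lt_of_le hu.2 hc1⟩
        have h1 : HasDerivWithinAt γ (derivWithin γ (Set.Icc 0 1) u) (Set.Icc 0 1) u :=
          (hγ1.differentiableOn one_ne_zero u ⟨hu01.1, hu01.2.le⟩).hasDerivWithinAt
        exact (h1.mono_of_mem_nhdsWithin (Icc_mem_nhdsGE_of_mem hu01)).sub_const _
      · intro u hu
        have hu01 : u ∈ Set.Ico (0:ℝ) 1 := ⟨ha.trans hu.1, lt_of_lt_of_le hu.2 hc1⟩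
        have hgint : IntervalIntegrable g volume 0 u :=
          (hgc.mono (Set.Icc_subset_Icc le_rfl hu01.2.le)).intervalIntegrable_of_Icc hu01.1
        have hmem : Set.Ioc u 1 ∈ nhdsWithin u (Set.Ioi u) :=
          Ioc_mem_nhdsGT_of_mem ⟨le_rfl, hu01.2⟩
        have hmem2 : Set.Icc (0:ℝ) 1 ∈ nhdsWithin u (Set.Ioi u) :=
          mem_of_superset hmem (Set.Ioc_subset_Icc_self.trans (Set.Icc_subset_Icc hu01.1 le_rfl))
        have hmeas : StronglyMeasurableAtFilter g (nhdsWithin u (Set.Ioi u)) volume :=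
          ⟨Set.Icc 0 1, hmem2, hgc.aestronglyMeasurable measurableSet_Icc⟩
        have hcw : ContinuousWithinAt g (Set.Ioi u) u :=
          (hgc.continuousWithinAt ⟨hu01.1, hu01.2.le⟩).mono_of_mem_nhdsWithin hmem2
        have hsg : HasDerivWithinAt (fun v => ∫ τ in (0:ℝ)..v, g τ) (g u) (Set.Ici u) u :=
          intervalIntegral.integral_hasDerivWithinAt_right hgint hmeas hcw
        have hmem3 : Set.Icc (0:ℝ) 1 ∈ nhdsWithin u (Set.Ici u) :=
          Icc_mem_nhdsGE_of_mem hu01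
        have hs' : HasDerivWithinAt s (g u) (Set.Ici u) u := by
          refine hsg.congr_of_eventuallyEq ?_ (hseq u ⟨hu01.1, hu01.2.le⟩)
          exact eventually_of_mem hmem3 (fun v hv => hseq v hv)
        exact hs'.sub_const _
      · intro u _; exact le_rfl
    exact key (Set.right_mem_Icc.mpr hac)
  -- derivative of s at interior points
  have hfIoo : ContinuousOn f (Set.Ioo 0 1) :=
    (hgc.mono Set.Ioo_subset_Icc_self).congr hfg
  have hsd : ∀ t ∈ Set.Ioo (0:ℝ) 1, HasDerivAt s (f t) t := by
    intro t ht
    exact intervalIntegral.integral_hasDerivAt_right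
      (hIntf 0 t le_rfl ht.1.le ht.2.le)
      (hfIoo.stronglyMeasurableAtFilter isOpen_Ioo t ht)
      (hfIoo.continuousAt (Ioo_mem_nhds ht.1 ht.2))
  -- midpoint
  obtain ⟨c, hc01, hsc⟩ : ∃ c ∈ Set.Icc (0:ℝ) 1, s c = L / 2 := by
    have h1 := intermediate_value_Icc (zero_le_one) hscont
    have hmem : L / 2 ∈ Set.Icc (s 0) (s 1) := by
      rw [hs0]; constructor <;> [linarith; linarith]
    obtain ⟨c, hc, hcv⟩ := h1 hmem
    exact ⟨c, hc, hcv⟩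
  have hc0 : (0:ℝ) ≤ c := hc01.1
  have hc1 : c ≤ 1 := hc01.2
  have hlog0 : 0 ≤ Real.log (1 + L / m) := by
    apply Real.log_nonneg
    have : 0 ≤ L / m := div_nonneg hL0 hm.le
    linarith
  -- the key logarithmic bound (used in both halves)
  have hloglem : m < L / 2 → Real.log (L / 2) - Real.log m ≤ Real.log (1 + L / m) := by
    intro hml
    have h1 : Real.log m + Real.log (1 + L / m) = Real.log (m + L) := by
      rw [← Real.log_mul hm.ne' (by positivity)]
      congr 1; field_simp
    have h2 : Real.log (L / 2) ≤ Real.log (m + L) :=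
      Real.log_le_log (by linarith) (by linarith)
    linarith
  -- continuity helpers
  have hwd : ∀ a' c' : ℝ, 0 ≤ a' → c' ≤ 1 →
      ContinuousOn (fun t => (dD D (γ t))⁻¹) (Set.Icc a' c') := by
    intro a' c' ha' hc'
    exact (hdcont.mono (Set.Icc_subset_Icc ha' hc')).inv₀
      (fun t ht => (hdpos t ⟨le_trans ha' ht.1, ht.2.trans hc'⟩).ne')
  have hsmcont : ∀ a' c' : ℝ, 0 ≤ a' → c' ≤ 1 →
      ContinuousOn (fun t => 2 * b / max (s t) m) (Set.Icc a' c') := by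
    intro a' c' ha' hc'
    exact continuousOn_const.div
      (continuous_max.comp_continuousOn (f := fun t => (s t, m))
        (ContinuousOn.prodMk (hscont.mono (Set.Icc_subset_Icc ha' hc')) continuousOn_const))
      (fun t _ => (lt_max_of_lt_right hm).ne')
  have hsmcont2 : ∀ a' c' : ℝ, 0 ≤ a' → c' ≤ 1 →
      ContinuousOn (fun t => 2 * b / max (s 1 - s t) m) (Set.Icc a' c') := by
    intro a' c' ha' hc'
    exact continuousOn_const.div
      (continuous_max.comp_continuousOn (f := fun t => (s 1 - s t, m))
        (ContinuousOn.prodMk (continuousOn_const.sub (hscont.mono (Set.Icc_subset_Icc ha' hc')))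
          continuousOn_const))
      (fun t _ => (lt_max_of_lt_right hm).ne')
  -- FIRST HALF
  have half1 : ∫ t in (0:ℝ)..c, f t * (dD D (γ t))⁻¹ ≤ 2*b*(1 + Real.log (1 + L/m)) := by
    have hmaxb : ∀ t ∈ Set.Icc (0:ℝ) c, max (s t) m ≤ 2*b*dD D (γ t) := by
      intro t htc
      have ht01 : t ∈ Set.Icc (0:ℝ) 1 := ⟨htc.1, htc.2.trans hc1⟩
      have hd := hdpos t ht01
      have hst : s t ≤ L/2 := by
        have := hsmono t c ht01.1 htc.2 hc1; linarith [hsc]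
      have hstL : s t ≤ s 1 := hsmono t 1 ht01.1 ht01.2 le_rfl
      have h1 : s t ≤ b * dD D (γ t) := by
        have hco := hcone t ht01
        have e1 : sublen γ 0 t = s t := rfl
        have e2 : sublen γ t 1 = s 1 - s t := (hsub t 1 ht01.1 ht01.2 le_rfl).symm
        rw [e1, e2] at hco
        rw [min_eq_left (by rw [← hL_def]; linarith : s t ≤ s 1 - s t)] at hco
        exact hco
      have h2 : m - s t ≤ dD D (γ t) := by
        have hdist : ‖γ t - γ 0‖ ≤ s t - s 0 := harc 0 t le_rfl ht01.1 ht01.2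
        have h3 : dD D x ≤ dD D (γ t) + dist x (γ t) := Metric.infDist_le_infDist_add_dist
        have h4 : dist x (γ t) ≤ s t := by
          rw [dist_comm, dist_eq_norm, ← hγx]
          linarith [hs0]
        have h5 : m ≤ dD D x := min_le_left _ _
        linarith
      apply max_le
      · nlinarith
      · nlinarith
    have hptw : ∀ t ∈ Set.Icc (0:ℝ) c, f t * (dD D (γ t))⁻¹ ≤ f t * (2*b / max (s t) m) := by
      intro t htc
      have ht01 : t ∈ Set.Icc (0:ℝ) 1 := ⟨htc.1, htc.2.trans hc1⟩
      have hd := hdpos t ht01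
      have hmaxpos : (0:ℝ) < max (s t) m := lt_max_of_lt_right hm
      have hkey := hmaxb t htc
      have hle : (dD D (γ t))⁻¹ ≤ 2*b / max (s t) m := by
        rw [inv_eq_one_div, div_le_div_iff₀ hd hmaxpos]
        nlinarith
      exact mul_le_mul_of_nonneg_left hle (norm_nonneg _)
    have hi1 : IntervalIntegrable (fun t => f t * (dD D (γ t))⁻¹) volume 0 c :=
      hIntMul _ 0 c le_rfl hc0 hc1 (hwd 0 c le_rfl hc1)
    have hi2 : IntervalIntegrable (fun t => f t * (2*b / max (s t) m)) volume 0 c :=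
      hIntMul _ 0 c le_rfl hc0 hc1 (hsmcont 0 c le_rfl hc1)
    have step1 := intervalIntegral.integral_mono_on hc0 hi1 hi2 hptw
    have target : ∫ t in (0:ℝ)..c, f t * (2*b / max (s t) m) ≤ 2*b*(1 + Real.log (1 + L/m)) := by
      rcases le_or_gt (L/2) m with hcase | hcase
      · have hpt2 : ∀ t ∈ Set.Icc (0:ℝ) c, f t * (2*b/max (s t) m) ≤ f t * (2*b/m) := by
          intro t _
          refine mul_le_mul_of_nonneg_left ?_ (norm_nonneg _)
          rw [div_le_div_iff₀ (lt_max_of_lt_right hm) hm]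
          nlinarith [le_max_right (s t) m]
        have hi3 : IntervalIntegrable (fun t => f t * (2*b/m)) volume 0 c :=
          hIntMul _ 0 c le_rfl hc0 hc1 continuousOn_const
        calc ∫ t in (0:ℝ)..c, f t * (2*b / max (s t) m)
            ≤ ∫ t in (0:ℝ)..c, f t * (2*b/m) :=
              intervalIntegral.integral_mono_on hc0 hi2 hi3 hpt2
          _ = s c * (2*b/m) := intervalIntegral.integral_mul_const _ _
          _ = L/2 * (2*b/m) := by rw [hsc]
          _ ≤ m * (2*b/m) := by
              apply mul_le_mul_of_nonneg_right hcase (by positivity)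
          _ = 2*b := by field_simp
          _ ≤ 2*b*(1 + Real.log (1 + L/m)) := by nlinarith [hlog0, hb]
      · obtain ⟨τ, hτmem, hsτ⟩ : ∃ τ ∈ Set.Icc (0:ℝ) c, s τ = m := by
          have h1 := intermediate_value_Icc hc0 (hscont.mono (Set.Icc_subset_Icc le_rfl hc1))
          have hmem : m ∈ Set.Icc (s 0) (s c) := by
            rw [hs0, hsc]; exact ⟨hm.le, by linarith⟩
          obtain ⟨τ, h, hv⟩ := h1 hmem; exact ⟨τ, h, hv⟩
        have hτ0 : (0:ℝ) ≤ τ := hτmem.1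
        have hτc : τ ≤ c := hτmem.2
        have hτ1 : τ ≤ 1 := hτc.trans hc1
        have hiA : IntervalIntegrable (fun t => f t * (2*b / max (s t) m)) volume 0 τ :=
          hIntMul _ 0 τ le_rfl hτ0 hτ1 (hsmcont 0 τ le_rfl hτ1)
        have hiB : IntervalIntegrable (fun t => f t * (2*b / max (s t) m)) volume τ c :=
          hIntMul _ τ c hτ0 hτc hc1 (hsmcont τ c hτ0 hc1)
        rw [← intervalIntegral.integral_add_adjacent_intervals hiA hiB]
        have hpA : ∫ t in (0:ℝ)..τ, f t * (2*b / max (s t) m) ≤ 2*b := by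
          have hpt2 : ∀ t ∈ Set.Icc (0:ℝ) τ, f t * (2*b/max (s t) m) ≤ f t * (2*b/m) := by
            intro t _
            refine mul_le_mul_of_nonneg_left ?_ (norm_nonneg _)
            rw [div_le_div_iff₀ (lt_max_of_lt_right hm) hm]
            nlinarith [le_max_right (s t) m]
          have hi3 : IntervalIntegrable (fun t => f t * (2*b/m)) volume 0 τ :=
            hIntMul _ 0 τ le_rfl hτ0 hτ1 continuousOn_const
          calc ∫ t in (0:ℝ)..τ, f t * (2*b / max (s t) m)
              ≤ ∫ t in (0:ℝ)..τ, f t * (2*b/m) :=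
                intervalIntegral.integral_mono_on hτ0 hiA hi3 hpt2
            _ = s τ * (2*b/m) := intervalIntegral.integral_mul_const _ _
            _ = 2*b := by rw [hsτ]; field_simp
        have hpB : ∫ t in τ..c, f t * (2*b / max (s t) m) ≤ 2*b*Real.log (1 + L/m) := by
          have hspos : ∀ t ∈ Set.Icc τ c, m ≤ s t := by
            intro t ht
            have := hsmono τ t hτ0 ht.1 (ht.2.trans hc1); linarith [hsτ]
          have hpt2 : ∀ t ∈ Set.Icc τ c, f t * (2*b/max (s t) m) ≤ 2*b*(f t * (s t)⁻¹) := by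
            intro t ht
            have hstpos : 0 < s t := lt_of_lt_of_le hm (hspos t ht)
            have h5 : 2*b/max (s t) m ≤ 2*b/(s t) := by
              rw [div_le_div_iff₀ (lt_max_of_lt_right hm) hstpos]
              nlinarith [le_max_left (s t) m]
            calc f t * (2*b/max (s t) m) ≤ f t * (2*b/(s t)) :=
                  mul_le_mul_of_nonneg_left h5 (norm_nonneg _)
              _ = 2*b*(f t * (s t)⁻¹) := by field_simp
          have hwcont : ContinuousOn (fun t => (s t)⁻¹) (Set.Icc τ c) :=
            (hscont.mono (Set.Icc_subset_Icc hτ0 hc1)).inv₀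
              (fun t ht => (lt_of_lt_of_le hm (hspos t ht)).ne')
          have hi4 : IntervalIntegrable (fun t => f t * (s t)⁻¹) volume τ c :=
            hIntMul _ τ c hτ0 hτc hc1 hwcont
          have hi4' : IntervalIntegrable (fun t => 2*b*(f t * (s t)⁻¹)) volume τ c :=
            hi4.const_mul _
          have step := intervalIntegral.integral_mono_on hτc hiB hi4' hpt2
          have hFTC : ∫ t in τ..c, f t * (s t)⁻¹ = Real.log (s c) - Real.log (s τ) := by
            have hcont : ContinuousOn (fun t => Real.log (s t)) (Set.Icc τ c) :=
              (hscont.mono (Set.Icc_subset_Icc hτ0 hc1)).log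
                (fun t ht => (lt_of_lt_of_le hm (hspos t ht)).ne')
            have hderiv : ∀ t ∈ Set.Ioo τ c,
                HasDerivWithinAt (fun u => Real.log (s u)) (f t * (s t)⁻¹) (Set.Ioi t) t := by
              intro t ht
              have ht01 : t ∈ Set.Ioo (0:ℝ) 1 :=
                ⟨lt_of_le_of_lt hτ0 ht.1, lt_of_lt_of_le ht.2 hc1⟩
              have hstpos : 0 < s t := lt_of_lt_of_le hm (hspos t ⟨ht.1.le, ht.2.le⟩)
              have h := (hsd t ht01).log hstpos.ne'
              exact (by simpa [div_eq_mul_inv] using h : HasDerivAt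
                (fun u => Real.log (s u)) (f t * (s t)⁻¹) t).hasDerivWithinAt
            exact intervalIntegral.integral_eq_sub_of_hasDeriv_right_of_le hτc hcont hderiv hi4
          calc ∫ t in τ..c, f t * (2*b / max (s t) m)
              ≤ ∫ t in τ..c, 2*b*(f t * (s t)⁻¹) := step
            _ = 2*b*∫ t in τ..c, f t * (s t)⁻¹ := intervalIntegral.integral_const_mul _ _
            _ = 2*b*(Real.log (s c) - Real.log (s τ)) := by rw [hFTC]
            _ = 2*b*(Real.log (L/2) - Real.log m) := by rw [hsc, hsτ]
            _ ≤ 2*b*Real.log (1+L/m) := by nlinarith [hloglem hcase, hb]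
        have hring : 2*b*(1 + Real.log (1+L/m)) = 2*b + 2*b*Real.log (1+L/m) := by ring
        linarith
    linarith
  -- SECOND HALF
  have half2 : ∫ t in c..(1:ℝ), f t * (dD D (γ t))⁻¹ ≤ 2*b*(1 + Real.log (1 + L/m)) := by
    have hmaxb : ∀ t ∈ Set.Icc c (1:ℝ), max (s 1 - s t) m ≤ 2*b*dD D (γ t) := by
      intro t htc
      have ht01 : t ∈ Set.Icc (0:ℝ) 1 := ⟨hc0.trans htc.1, htc.2⟩
      have hd := hdpos t ht01
      have hst : L/2 ≤ s t := by
        have := hsmono c t hc0 htc.1 htc.2; linarith [hsc]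
      have h1 : s 1 - s t ≤ b * dD D (γ t) := by
        have hco := hcone t ht01
        have e1 : sublen γ 0 t = s t := rfl
        have e2 : sublen γ t 1 = s 1 - s t := (hsub t 1 ht01.1 ht01.2 le_rfl).symm
        rw [e1, e2] at hco
        rw [min_eq_right (by rw [← hL_def]; linarith : s 1 - s t ≤ s t)] at hco
        exact hco
      have h2 : m - (s 1 - s t) ≤ dD D (γ t) := by
        have hdist : ‖γ 1 - γ t‖ ≤ s 1 - s t := harc t 1 ht01.1 ht01.2 le_rfl
        have h3 : dD D y ≤ dD D (γ t) + dist y (γ t) := Metric.infDist_le_infDist_add_dist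
        have h4 : dist y (γ t) ≤ s 1 - s t := by
          rw [dist_comm, dist_eq_norm, ← hγy, norm_sub_rev]
          exact hdist
        have h5 : m ≤ dD D y := min_le_right _ _
        linarith
      apply max_le
      · nlinarith
      · nlinarith
    have hptw : ∀ t ∈ Set.Icc c (1:ℝ),
        f t * (dD D (γ t))⁻¹ ≤ f t * (2*b / max (s 1 - s t) m) := by
      intro t htc
      have ht01 : t ∈ Set.Icc (0:ℝ) 1 := ⟨hc0.trans htc.1, htc.2⟩
      have hd := hdpos t ht01
      have hmaxpos : (0:ℝ) < max (s 1 - s t) m := lt_max_of_lt_right hm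
      have hkey := hmaxb t htc
      have hle : (dD D (γ t))⁻¹ ≤ 2*b / max (s 1 - s t) m := by
        rw [inv_eq_one_div, div_le_div_iff₀ hd hmaxpos]
        nlinarith
      exact mul_le_mul_of_nonneg_left hle (norm_nonneg _)
    have hi1 : IntervalIntegrable (fun t => f t * (dD D (γ t))⁻¹) volume c 1 :=
      hIntMul _ c 1 hc0 hc1 le_rfl (hwd c 1 hc0 le_rfl)
    have hi2 : IntervalIntegrable (fun t => f t * (2*b / max (s 1 - s t) m)) volume c 1 :=
      hIntMul _ c 1 hc0 hc1 le_rfl (hsmcont2 c 1 hc0 le_rfl)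
    have step1 := intervalIntegral.integral_mono_on hc1 hi1 hi2 hptw
    have target : ∫ t in c..(1:ℝ), f t * (2*b / max (s 1 - s t) m)
        ≤ 2*b*(1 + Real.log (1 + L/m)) := by
      rcases le_or_gt (L/2) m with hcase | hcase
      · have hpt2 : ∀ t ∈ Set.Icc c (1:ℝ),
            f t * (2*b/max (s 1 - s t) m) ≤ f t * (2*b/m) := by
          intro t _
          refine mul_le_mul_of_nonneg_left ?_ (norm_nonneg _)
          rw [div_le_div_iff₀ (lt_max_of_lt_right hm) hm]
          nlinarith [le_max_right (s 1 - s t) m]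
        have hi3 : IntervalIntegrable (fun t => f t * (2*b/m)) volume c 1 :=
          hIntMul _ c 1 hc0 hc1 le_rfl continuousOn_const
        have hsub1 : ∫ t in c..(1:ℝ), f t = s 1 - s c := (hsub c 1 hc0 hc1 le_rfl).symm
        calc ∫ t in c..(1:ℝ), f t * (2*b / max (s 1 - s t) m)
            ≤ ∫ t in c..(1:ℝ), f t * (2*b/m) :=
              intervalIntegral.integral_mono_on hc1 hi2 hi3 hpt2
          _ = (s 1 - s c) * (2*b/m) := by
              rw [intervalIntegral.integral_mul_const, hsub1]
          _ = L/2 * (2*b/m) := by rw [hsc, ← hL_def]; ring_nf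
          _ ≤ m * (2*b/m) := by
              apply mul_le_mul_of_nonneg_right hcase (by positivity)
          _ = 2*b := by field_simp
          _ ≤ 2*b*(1 + Real.log (1 + L/m)) := by nlinarith [hlog0, hb]
      · obtain ⟨τ, hτmem, hsτ⟩ : ∃ τ ∈ Set.Icc c (1:ℝ), s τ = L - m := by
          have h1 := intermediate_value_Icc hc1 (hscont.mono (Set.Icc_subset_Icc hc0 le_rfl))
          have hmem : L - m ∈ Set.Icc (s c) (s 1) := by
            rw [hsc, ← hL_def]; exact ⟨by linarith, by linarith⟩
          obtain ⟨τ, h, hv⟩ := h1 hmem; exact ⟨τ, h, hv⟩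
        have hτc : c ≤ τ := hτmem.1
        have hτ1 : τ ≤ 1 := hτmem.2
        have hτ0 : (0:ℝ) ≤ τ := hc0.trans hτc
        have hiA : IntervalIntegrable (fun t => f t * (2*b / max (s 1 - s t) m)) volume c τ :=
          hIntMul _ c τ hc0 hτc hτ1 (hsmcont2 c τ hc0 hτ1)
        have hiB : IntervalIntegrable (fun t => f t * (2*b / max (s 1 - s t) m)) volume τ 1 :=
          hIntMul _ τ 1 hτ0 hτ1 le_rfl (hsmcont2 τ 1 hτ0 le_rfl)
        rw [← intervalIntegral.integral_add_adjacent_intervals hiA hiB]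
        have hpB : ∫ t in τ..(1:ℝ), f t * (2*b / max (s 1 - s t) m) ≤ 2*b := by
          have hpt2 : ∀ t ∈ Set.Icc τ (1:ℝ),
              f t * (2*b/max (s 1 - s t) m) ≤ f t * (2*b/m) := by
            intro t _
            refine mul_le_mul_of_nonneg_left ?_ (norm_nonneg _)
            rw [div_le_div_iff₀ (lt_max_of_lt_right hm) hm]
            nlinarith [le_max_right (s 1 - s t) m]
          have hi3 : IntervalIntegrable (fun t => f t * (2*b/m)) volume τ 1 :=
            hIntMul _ τ 1 hτ0 hτ1 le_rfl continuousOn_const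
          have hsub1 : ∫ t in τ..(1:ℝ), f t = s 1 - s τ := (hsub τ 1 hτ0 hτ1 le_rfl).symm
          calc ∫ t in τ..(1:ℝ), f t * (2*b / max (s 1 - s t) m)
              ≤ ∫ t in τ..(1:ℝ), f t * (2*b/m) :=
                intervalIntegral.integral_mono_on hτ1 hiB hi3 hpt2
            _ = (s 1 - s τ) * (2*b/m) := by
                rw [intervalIntegral.integral_mul_const, hsub1]
            _ = m * (2*b/m) := by rw [hsτ, ← hL_def]; ring_nf
            _ = 2*b := by field_simp
        have hpA : ∫ t in c..τ, f t * (2*b / max (s 1 - s t) m)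
            ≤ 2*b*Real.log (1 + L/m) := by
          have hrpos : ∀ t ∈ Set.Icc c τ, m ≤ s 1 - s t := by
            intro t ht
            have := hsmono t τ (hc0.trans ht.1) ht.2 hτ1
            linarith [hsτ]
          have hpt2 : ∀ t ∈ Set.Icc c τ,
              f t * (2*b/max (s 1 - s t) m) ≤ 2*b*(f t * (s 1 - s t)⁻¹) := by
            intro t ht
            have hrt : 0 < s 1 - s t := lt_of_lt_of_le hm (hrpos t ht)
            have h5 : 2*b/max (s 1 - s t) m ≤ 2*b/(s 1 - s t) := by
              rw [div_le_div_iff₀ (lt_max_of_lt_right hm) hrt]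
              nlinarith [le_max_left (s 1 - s t) m]
            calc f t * (2*b/max (s 1 - s t) m) ≤ f t * (2*b/(s 1 - s t)) :=
                  mul_le_mul_of_nonneg_left h5 (norm_nonneg _)
              _ = 2*b*(f t * (s 1 - s t)⁻¹) := by field_simp
          have hwcont : ContinuousOn (fun t => (s 1 - s t)⁻¹) (Set.Icc c τ) :=
            (continuousOn_const.sub (hscont.mono (Set.Icc_subset_Icc hc0 hτ1))).inv₀
              (fun t ht => (lt_of_lt_of_le hm (hrpos t ht)).ne')
          have hi4 : IntervalIntegrable (fun t => f t * (s 1 - s t)⁻¹) volume c τ :=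
            hIntMul _ c τ hc0 hτc hτ1 hwcont
          have hi4' : IntervalIntegrable (fun t => 2*b*(f t * (s 1 - s t)⁻¹)) volume c τ :=
            hi4.const_mul _
          have step := intervalIntegral.integral_mono_on hτc hiA hi4' hpt2
          have hFTC : ∫ t in c..τ, f t * (s 1 - s t)⁻¹
              = (-Real.log (s 1 - s τ)) - (-Real.log (s 1 - s c)) := by
            have hcont : ContinuousOn (fun t => -Real.log (s 1 - s t)) (Set.Icc c τ) :=
              ((continuousOn_const.sub (hscont.mono (Set.Icc_subset_Icc hc0 hτ1))).log
                (fun t ht => (lt_of_lt_of_le hm (hrpos t ht)).ne')).neg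
            have hderiv : ∀ t ∈ Set.Ioo c τ,
                HasDerivWithinAt (fun u => -Real.log (s 1 - s u))
                  (f t * (s 1 - s t)⁻¹) (Set.Ioi t) t := by
              intro t ht
              have ht01 : t ∈ Set.Ioo (0:ℝ) 1 :=
                ⟨lt_of_le_of_lt hc0 ht.1, lt_of_lt_of_le ht.2 hτ1⟩
              have hrt : 0 < s 1 - s t := lt_of_lt_of_le hm (hrpos t ⟨ht.1.le, ht.2.le⟩)
              have h0 : HasDerivAt (fun u => s 1 - s u) (-(f t)) t := by
                have h00 := (hasDerivAt_const t (s 1)).sub (hsd t ht01); rw [zero_sub] at h00; exact h00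
              have h1 := (h0.log hrt.ne').neg
              have h2 : -(-(f t) / (s 1 - s t)) = f t * (s 1 - s t)⁻¹ := by
                field_simp
              rw [h2] at h1
              exact h1.hasDerivWithinAt
            exact intervalIntegral.integral_eq_sub_of_hasDeriv_right_of_le hτc hcont hderiv hi4
          have e1 : s 1 - s τ = m := by rw [hsτ, ← hL_def]; ring
          have e2 : s 1 - s c = L/2 := by rw [hsc, ← hL_def]; ring
          calc ∫ t in c..τ, f t * (2*b / max (s 1 - s t) m)
              ≤ ∫ t in c..τ, 2*b*(f t * (s 1 - s t)⁻¹) := step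
            _ = 2*b*∫ t in c..τ, f t * (s 1 - s t)⁻¹ :=
                intervalIntegral.integral_const_mul _ _
            _ = 2*b*((-Real.log (s 1 - s τ)) - (-Real.log (s 1 - s c))) := by rw [hFTC]
            _ = 2*b*(Real.log (L/2) - Real.log m) := by rw [e1, e2]; ring
            _ ≤ 2*b*Real.log (1+L/m) := by nlinarith [hloglem hcase, hb]
        have hring : 2*b*(1 + Real.log (1+L/m)) = 2*b + 2*b*Real.log (1+L/m) := by ring
        linarith
    linarith
  -- COMBINE
  have h1i : IntervalIntegrable (fun t => f t * (dD D (γ t))⁻¹) volume 0 c :=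
    hIntMul _ 0 c le_rfl hc0 hc1 (hwd 0 c le_rfl hc1)
  have h2i : IntervalIntegrable (fun t => f t * (dD D (γ t))⁻¹) volume c 1 :=
    hIntMul _ c 1 hc0 hc1 le_rfl (hwd c 1 hc0 le_rfl)
  have hqh : qhLen D γ = (∫ t in (0:ℝ)..c, f t * (dD D (γ t))⁻¹)
      + ∫ t in c..(1:ℝ), f t * (dD D (γ t))⁻¹ := by
    rw [intervalIntegral.integral_add_adjacent_intervals h1i h2i]
    unfold qhLen
    simp only [div_eq_mul_inv]
    rfl
  have hclen : clen γ = L := rfl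
  rw [hqh, hclen]
  have hring : 4*b*(1 + Real.log (1 + L/m)) = 2*b*(1 + Real.log (1 + L/m))
      + 2*b*(1 + Real.log (1 + L/m)) := by ring
  linarith
end
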